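/- Let (Ω, μ) be a probability space, let 𝒳, ℰ, 𝒜, 𝒜⋆, 𝒟 be finite types, let X, X̃ : Ω → 𝒳, δ : Ω → 𝒟, A⋆ : Ω → 𝒜⋆ be measurable random variables, let φ : 𝒳 → ℰ (the encoder) and f : ℰ → 𝒜 (the head) be any functions, and set π = f ∘ φ, Aπ = π ∘ X, Ãπ = π ∘ X̃. Then I[A⋆ : Aπ] + ( I[Aπ : Ãπ] − I[Aπ : δ] ) ≤ H[A⋆] + I[φ ∘ X : φ ∘ X̃]. -/
import Mathlib


open MeasureTheory ProbabilityTheory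

/-- Shannon entropy (in nats) of a random variable `X` taking values in a finite type,
with respect to the measure `μ`: `H[X] = - ∑ s, p(s) log p(s)` where `p(s) = μ (X ⁻¹' {s})`. -/
noncomputable def shannonEntropy {Ω : Type*} [MeasurableSpace Ω] {S : Type*} [Fintype S]
    (μ : Measure Ω) (X : Ω → S) : ℝ :=
  - ∑ s : S, (μ (X ⁻¹' {s})).toReal * Real.log (μ (X ⁻¹' {s})).toReal

/-- Mutual information (in nats) `I[X : Y] = H[X] + H[Y] - H[(X, Y)]`. -/
noncomputable def mutualInfo {Ω : Type*} [MeasurableSpace Ω] {S T : Type*} [Fintype S] [Fintype T]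
    (μ : Measure Ω) (X : Ω → S) (Y : Ω → T) : ℝ :=
  shannonEntropy μ X + shannonEntropy μ Y - shannonEntropy μ (fun ω => (X ω, Y ω))

/-- Conditional Shannon entropy `H[X | Z] = H[(X, Z)] - H[Z]`. -/
noncomputable def condEntropy' {Ω : Type*} [MeasurableSpace Ω] {S T : Type*} [Fintype S] [Fintype T]
    (μ : Measure Ω) (X : Ω → S) (Z : Ω → T) : ℝ :=
  shannonEntropy μ (fun ω => (X ω, Z ω)) - shannonEntropy μ Z

/-- Conditional mutual information `I[X : Y | Z] = H[X | Z] + H[Y | Z] - H[(X, Y) | Z]`. -/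
noncomputable def condMutualInfo' {Ω : Type*} [MeasurableSpace Ω] {S T U : Type*}
    [Fintype S] [Fintype T] [Fintype U]
    (μ : Measure Ω) (X : Ω → S) (Y : Ω → T) (Z : Ω → U) : ℝ :=
  condEntropy' μ X Z + condEntropy' μ Y Z - condEntropy' μ (fun ω => (X ω, Y ω)) Z

/-! ### Auxiliary finite-distribution machinery -/

section Aux

open Finset

variable {M S T U : Type*} [Fintype M] [Fintype S] [Fintype T] [Fintype U]

/-- Pushforward of a mass function along a map. -/
noncomputable def distPush [DecidableEq S] (p : M → ℝ) (c : M → S) : S → ℝ :=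
  fun s => ∑ m ∈ Finset.univ.filter (fun m => c m = s), p m

/-- Entropy of a mass function. -/
noncomputable def distEnt (q : S → ℝ) : ℝ := - ∑ s, q s * Real.log (q s)

/-- Mutual information of two maps with respect to a base mass function. -/
noncomputable def distMI [DecidableEq S] [DecidableEq T] (p : M → ℝ) (u : M → S) (v : M → T) :
    ℝ :=
  distEnt (distPush p u) + distEnt (distPush p v)
    - distEnt (distPush p (fun m => (u m, v m)))

lemma distPush_nonneg [DecidableEq S] {p : M → ℝ} (hp : ∀ m, 0 ≤ p m) (c : M → S) (s : S) :
    0 ≤ distPush p c s :=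
  Finset.sum_nonneg fun m _ => hp m

lemma sum_distPush [DecidableEq S] (p : M → ℝ) (c : M → S) :
    ∑ s, distPush p c s = ∑ m, p m :=
  Finset.sum_fiberwise Finset.univ c p

lemma sum_distPush_mul [DecidableEq S] (p : M → ℝ) (u : M → S) (F : S → ℝ) :
    ∑ s, distPush p u s * F s = ∑ m, p m * F (u m) := by
  rw [← Finset.sum_fiberwise Finset.univ u (fun m => p m * F (u m))]
  refine Finset.sum_congr rfl fun s _ => ?_
  rw [distPush, Finset.sum_mul]
  refine Finset.sum_congr rfl fun m hm => ?_
  rw [(Finset.mem_filter.1 hm).2]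

lemma distPush_comp [DecidableEq S] [DecidableEq U] (p : M → ℝ) (c : M → U) (h : U → S)
    (s : S) :
    distPush p (fun m => h (c m)) s
      = ∑ x ∈ Finset.univ.filter (fun x => h x = s), distPush p c x := by
  unfold distPush
  rw [← Finset.sum_fiberwise (Finset.univ.filter (fun m => h (c m) = s)) c p]
  conv_rhs => rw [Finset.sum_filter]
  refine Finset.sum_congr rfl fun x _ => ?_
  by_cases hx : h x = s
  · simp only [hx, if_true]
    congr 1
    ext m
    simp only [Finset.mem_filter, Finset.mem_univ, true_and]
    constructor
    · rintro ⟨-, h2⟩; exact h2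
    · intro h2; exact ⟨by rw [h2, hx], h2⟩
  · simp only [hx, if_false]
    rw [Finset.filter_false_of_mem, Finset.sum_empty]
    rintro m hm rfl
    exact hx (Finset.mem_filter.1 hm).2

lemma distPush_pair_le_left [DecidableEq S] [DecidableEq T] {p : M → ℝ} (hp : ∀ m, 0 ≤ p m)
    (u : M → S) (v : M → T) (s : S) (t : T) :
    distPush p (fun m => (u m, v m)) (s, t) ≤ distPush p u s := by
  refine Finset.sum_le_sum_of_subset_of_nonneg ?_ fun m _ _ => hp m
  intro m hm
  simp only [Finset.mem_filter, Finset.mem_univ, true_and, Prod.mk.injEq] at hm ⊢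
  exact hm.1

lemma distPush_pair_le_right [DecidableEq S] [DecidableEq T] {p : M → ℝ} (hp : ∀ m, 0 ≤ p m)
    (u : M → S) (v : M → T) (s : S) (t : T) :
    distPush p (fun m => (u m, v m)) (s, t) ≤ distPush p v t := by
  refine Finset.sum_le_sum_of_subset_of_nonneg ?_ fun m _ _ => hp m
  intro m hm
  simp only [Finset.mem_filter, Finset.mem_univ, true_and, Prod.mk.injEq] at hm ⊢
  exact hm.2

lemma distEnt_push_fst [DecidableEq S] [DecidableEq T] (p : M → ℝ) (u : M → S) (v : M → T) :
    distEnt (distPush p u)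
      = - ∑ st : S × T, distPush p (fun m => (u m, v m)) st * Real.log (distPush p u st.1) := by
  have hu : distPush p u = distPush (distPush p (fun m => (u m, v m))) Prod.fst :=
    funext fun s => distPush_comp p (fun m => (u m, v m)) Prod.fst s
  rw [distEnt, hu]
  congr 1
  exact sum_distPush_mul (distPush p (fun m => (u m, v m))) Prod.fst
    (fun s => Real.log (distPush (distPush p (fun m => (u m, v m))) Prod.fst s))

lemma distEnt_push_snd [DecidableEq S] [DecidableEq T] (p : M → ℝ) (u : M → S) (v : M → T) :
    distEnt (distPush p v)
      = - ∑ st : S × T, distPush p (fun m => (u m, v m)) st * Real.log (distPush p v st.2) := by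
  have hv : distPush p v = distPush (distPush p (fun m => (u m, v m))) Prod.snd :=
    funext fun t => distPush_comp p (fun m => (u m, v m)) Prod.snd t
  rw [distEnt, hv]
  congr 1
  exact sum_distPush_mul (distPush p (fun m => (u m, v m))) Prod.snd
    (fun t => Real.log (distPush (distPush p (fun m => (u m, v m))) Prod.snd t))

lemma distMI_eq [DecidableEq S] [DecidableEq T] (p : M → ℝ) (u : M → S) (v : M → T) :
    distMI p u v = ∑ st : S × T, distPush p (fun m => (u m, v m)) st *
      (Real.log (distPush p (fun m => (u m, v m)) st)
        - Real.log (distPush p u st.1) - Real.log (distPush p v st.2)) := by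
  rw [distMI, distEnt_push_fst p u v, distEnt_push_snd p u v, distEnt]
  have : ∀ st : S × T, distPush p (fun m => (u m, v m)) st *
      (Real.log (distPush p (fun m => (u m, v m)) st)
        - Real.log (distPush p u st.1) - Real.log (distPush p v st.2))
      = distPush p (fun m => (u m, v m)) st * Real.log (distPush p (fun m => (u m, v m)) st)
        - distPush p (fun m => (u m, v m)) st * Real.log (distPush p u st.1)
        - distPush p (fun m => (u m, v m)) st * Real.log (distPush p v st.2) :=
    fun st => by ring
  rw [Finset.sum_congr rfl fun st _ => this st, Finset.sum_sub_distrib, Finset.sum_sub_distrib]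
  ring

lemma distMI_eq' [DecidableEq S] [DecidableEq T] {p : M → ℝ} (hp : ∀ m, 0 ≤ p m)
    (u : M → S) (v : M → T) :
    distMI p u v = ∑ st : S × T, distPush p (fun m => (u m, v m)) st *
      (Real.log (distPush p (fun m => (u m, v m)) st)
        - Real.log (distPush p u st.1 * distPush p v st.2)) := by
  rw [distMI_eq]
  refine Finset.sum_congr rfl fun st _ => ?_
  obtain ⟨s, t⟩ := st
  by_cases h0 : distPush p (fun m => (u m, v m)) (s, t) = 0
  · rw [h0]; ring
  · have hPpos : 0 < distPush p (fun m => (u m, v m)) (s, t) :=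
      (distPush_nonneg hp _ _).lt_of_ne (Ne.symm h0)
    have hPU : 0 < distPush p u s := lt_of_lt_of_le hPpos (distPush_pair_le_left hp u v s t)
    have hPV : 0 < distPush p v t := lt_of_lt_of_le hPpos (distPush_pair_le_right hp u v s t)
    rw [Real.log_mul hPU.ne' hPV.ne']
    ring

/-- The log-sum inequality, in subtraction form. -/
lemma log_sum_ineq {ι : Type*} (s : Finset ι) (a b : ι → ℝ)
    (ha : ∀ i ∈ s, 0 ≤ a i) (hb : ∀ i ∈ s, 0 ≤ b i)
    (hab : ∀ i ∈ s, b i = 0 → a i = 0) :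
    (∑ i ∈ s, a i) * (Real.log (∑ i ∈ s, a i) - Real.log (∑ i ∈ s, b i))
      ≤ ∑ i ∈ s, a i * (Real.log (a i) - Real.log (b i)) := by
  set A := ∑ i ∈ s, a i with hA
  set B := ∑ i ∈ s, b i with hB
  have hA0 : 0 ≤ A := Finset.sum_nonneg ha
  rcases hA0.eq_or_lt with hA0' | hApos
  · have hzero : ∀ i ∈ s, a i = 0 := by
      intro i hi
      exact (Finset.sum_eq_zero_iff_of_nonneg ha).1 hA0'.symm i hi
    have h1 : (∑ i ∈ s, a i * (Real.log (a i) - Real.log (b i))) = 0 :=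
      Finset.sum_eq_zero fun i hi => by rw [hzero i hi, zero_mul]
    rw [h1, ← hA0', zero_mul]
  · -- A > 0, so B > 0
    have hex : ∃ i ∈ s, a i ≠ 0 := by
      by_contra hcon
      push_neg at hcon
      have : A = 0 := Finset.sum_eq_zero hcon
      exact absurd this (ne_of_gt hApos)
    obtain ⟨i0, hi0s, hi0⟩ := hex
    have hbi0 : 0 < b i0 := by
      rcases (hb i0 hi0s).eq_or_lt with h | h
      · exact absurd (hab i0 hi0s h.symm) hi0
      · exact h
    have hBpos : 0 < B :=
      lt_of_lt_of_le hbi0 (Finset.single_le_sum hb hi0s)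
    have key : ∀ i ∈ s,
        a i * (Real.log A - Real.log B) - a i * (Real.log (a i) - Real.log (b i))
          ≤ A / B * b i - a i := by
      intro i hi
      rcases (ha i hi).eq_or_lt with h0 | hpos
      · rw [← h0]
        have h1 : (0:ℝ) ≤ A / B * b i := mul_nonneg (div_nonneg hApos.le hBpos.le) (hb i hi)
        simp only [zero_mul, sub_zero]
        linarith
      · have hbpos : 0 < b i := by
          rcases (hb i hi).eq_or_lt with h | h
          · exact absurd (hab i hi h.symm) (ne_of_gt hpos)
          · exact h
        have hx : 0 < A * b i / (B * a i) := by positivity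
        have hlog := Real.log_le_sub_one_of_pos hx
        have hlogeq : Real.log (A * b i / (B * a i))
            = Real.log A + Real.log (b i) - (Real.log B + Real.log (a i)) := by
          rw [Real.log_div (by positivity) (by positivity),
            Real.log_mul (ne_of_gt hApos) (ne_of_gt hbpos),
            Real.log_mul (ne_of_gt hBpos) (ne_of_gt hpos)]
        have hmul := mul_le_mul_of_nonneg_left hlog (le_of_lt hpos)
        have hxval : a i * (A * b i / (B * a i)) = A / B * b i := by
          field_simp
        calc a i * (Real.log A - Real.log B) - a i * (Real.log (a i) - Real.log (b i))
            = a i * Real.log (A * b i / (B * a i)) := by rw [hlogeq]; ring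
          _ ≤ a i * (A * b i / (B * a i) - 1) := hmul
          _ = A / B * b i - a i := by rw [mul_sub, hxval, mul_one]
    have hsumkey := Finset.sum_le_sum key
    rw [Finset.sum_sub_distrib] at hsumkey
    have h1 : ∑ i ∈ s, a i * (Real.log A - Real.log B) = A * (Real.log A - Real.log B) := by
      rw [← Finset.sum_mul]
    have h2 : ∑ i ∈ s, (A / B * b i - a i) = 0 := by
      rw [Finset.sum_sub_distrib, ← Finset.mul_sum, ← hB, ← hA,
        div_mul_cancel₀ _ (ne_of_gt hBpos), sub_self]
    rw [h1, h2] at hsumkey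
    linarith

lemma distMI_nonneg [DecidableEq S] [DecidableEq T] {p : M → ℝ} (hp : ∀ m, 0 ≤ p m)
    (hsum : ∑ m, p m = 1) (u : M → S) (v : M → T) :
    0 ≤ distMI p u v := by
  have habP : ∀ st : S × T, distPush p u st.1 * distPush p v st.2 = 0 →
      distPush p (fun m => (u m, v m)) st = 0 := by
    rintro ⟨s, t⟩ h
    rcases mul_eq_zero.1 h with h | h
    · exact le_antisymm (h ▸ distPush_pair_le_left hp u v s t) (distPush_nonneg hp _ _)
    · exact le_antisymm (h ▸ distPush_pair_le_right hp u v s t) (distPush_nonneg hp _ _)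
  have hkey := log_sum_ineq (Finset.univ : Finset (S × T))
    (distPush p (fun m => (u m, v m))) (fun st => distPush p u st.1 * distPush p v st.2)
    (fun st _ => distPush_nonneg hp _ _)
    (fun st _ => mul_nonneg (distPush_nonneg hp _ _) (distPush_nonneg hp _ _))
    (fun st _ h => habP st h)
  have hA : ∑ st : S × T, distPush p (fun m => (u m, v m)) st = 1 := by
    rw [sum_distPush]; exact hsum
  have hB : ∑ st : S × T, distPush p u st.1 * distPush p v st.2 = 1 := by
    rw [Fintype.sum_prod_type]
    simp only [← Finset.mul_sum]
    rw [← Finset.sum_mul, sum_distPush, sum_distPush, hsum, one_mul]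
  rw [hA, hB] at hkey
  simp only [Real.log_one, sub_self, one_mul] at hkey
  rw [distMI_eq' hp]
  exact hkey

lemma distMI_le_ent [DecidableEq S] [DecidableEq T] {p : M → ℝ} (hp : ∀ m, 0 ≤ p m)
    (u : M → S) (v : M → T) :
    distMI p u v ≤ distEnt (distPush p u) := by
  have hkey : distEnt (distPush p v) ≤ distEnt (distPush p (fun m => (u m, v m))) := by
    rw [distEnt_push_snd p u v, distEnt]
    apply neg_le_neg
    refine Finset.sum_le_sum fun st _ => ?_
    obtain ⟨s, t⟩ := st
    by_cases h0 : distPush p (fun m => (u m, v m)) (s, t) = 0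
    · rw [h0, zero_mul, zero_mul]
    · have hPpos : 0 < distPush p (fun m => (u m, v m)) (s, t) :=
        (distPush_nonneg hp _ _).lt_of_ne (Ne.symm h0)
      exact mul_le_mul_of_nonneg_left
        (Real.log_le_log hPpos (distPush_pair_le_right hp u v s t)) (le_of_lt hPpos)
  rw [distMI]
  linarith

lemma distMI_comm [DecidableEq S] [DecidableEq T] (p : M → ℝ) (u : M → S) (v : M → T) :
    distMI p u v = distMI p v u := by
  have hswap : ∀ (s : S) (t : T),
      distPush p (fun m => (v m, u m)) (t, s) = distPush p (fun m => (u m, v m)) (s, t) := by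
    intro s t
    unfold distPush
    congr 1
    ext m
    simp only [Finset.mem_filter, Finset.mem_univ, true_and, Prod.mk.injEq]
    exact and_comm
  have hpair : distEnt (distPush p (fun m => (u m, v m)))
      = distEnt (distPush p (fun m => (v m, u m))) := by
    unfold distEnt
    congr 1
    refine Fintype.sum_equiv (Equiv.prodComm S T)
      (fun st => distPush p (fun m => (u m, v m)) st * Real.log (distPush p (fun m => (u m, v m)) st))
      (fun ts => distPush p (fun m => (v m, u m)) ts * Real.log (distPush p (fun m => (v m, u m)) ts))
      (fun st => ?_)
    obtain ⟨s, t⟩ := st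
    simp only [Equiv.prodComm_apply, Prod.swap_prod_mk, hswap]
  rw [distMI, distMI, hpair]
  ring

/-- Data processing inequality (deterministic, first argument). -/
lemma distMI_dpi [DecidableEq S] [DecidableEq T] [DecidableEq U] {p : M → ℝ}
    (hp : ∀ m, 0 ≤ p m) (u : M → S) (v : M → T) (h : S → U) :
    distMI p (fun m => h (u m)) v ≤ distMI p u v := by
  set P := distPush p (fun m => (u m, v m)) with hPdef
  have habP : ∀ st : S × T, distPush p u st.1 * distPush p v st.2 = 0 → P st = 0 := by
    rintro ⟨s, t⟩ hzz
    rcases mul_eq_zero.1 hzz with hz | hz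
    · exact le_antisymm (hz ▸ distPush_pair_le_left hp u v s t) (distPush_nonneg hp _ _)
    · exact le_antisymm (hz ▸ distPush_pair_le_right hp u v s t) (distPush_nonneg hp _ _)
  have hQ : ∀ wt : U × T, distPush p (fun m => (h (u m), v m)) wt
      = ∑ st ∈ Finset.univ.filter (fun st : S × T => (h st.1, st.2) = wt), P st :=
    fun wt => distPush_comp p (fun m => (u m, v m)) (fun st => (h st.1, st.2)) wt
  have hfib : ∀ (w : U) (t : T),
      Finset.univ.filter (fun st : S × T => (h st.1, st.2) = (w, t))
        = (Finset.univ.filter fun s => h s = w) ×ˢ {t} := by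
    intro w t
    ext ⟨s, t'⟩
    simp only [Finset.mem_filter, Finset.mem_univ, true_and, Prod.mk.injEq,
      Finset.mem_product, Finset.mem_singleton]
  have hQW : ∀ (w : U) (t : T),
      ∑ st ∈ Finset.univ.filter (fun st : S × T => (h st.1, st.2) = (w, t)),
          distPush p u st.1 * distPush p v st.2
        = distPush p (fun m => h (u m)) w * distPush p v t := by
    intro w t
    rw [hfib w t, Finset.sum_product, distPush_comp p u h w, Finset.sum_mul]
    refine Finset.sum_congr rfl fun s _ => ?_
    rw [Finset.sum_singleton]
  rw [distMI_eq' hp, distMI_eq' hp]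
  calc ∑ wt : U × T, distPush p (fun m => (h (u m), v m)) wt *
        (Real.log (distPush p (fun m => (h (u m), v m)) wt)
          - Real.log (distPush p (fun m => h (u m)) wt.1 * distPush p v wt.2))
      ≤ ∑ wt : U × T, ∑ st ∈ Finset.univ.filter (fun st : S × T => (h st.1, st.2) = wt),
          P st * (Real.log (P st) - Real.log (distPush p u st.1 * distPush p v st.2)) := by
        refine Finset.sum_le_sum fun wt _ => ?_
        obtain ⟨w, t⟩ := wt
        have hls := log_sum_ineq
          (Finset.univ.filter (fun st : S × T => (h st.1, st.2) = (w, t))) P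
          (fun st => distPush p u st.1 * distPush p v st.2)
          (fun st _ => distPush_nonneg hp _ _)
          (fun st _ => mul_nonneg (distPush_nonneg hp _ _) (distPush_nonneg hp _ _))
          (fun st _ hz => habP st hz)
        rw [hQW w t] at hls
        rw [hQ (w, t)]
        exact hls
    _ = ∑ st : S × T, P st * (Real.log (P st)
          - Real.log (distPush p u st.1 * distPush p v st.2)) :=
        Finset.sum_fiberwise Finset.univ (fun st : S × T => (h st.1, st.2))
          (fun st => P st * (Real.log (P st)
            - Real.log (distPush p u st.1 * distPush p v st.2)))

end Aux

/-! ### Bridge from measures to mass functions -/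

section Bridge

open Finset

variable {Ω : Type*} [MeasurableSpace Ω] (μ : Measure Ω) [IsProbabilityMeasure μ]
  {M : Type*} [Fintype M]

lemma bridge_ent {S : Type*} [Fintype S] [DecidableEq S] (Z : Ω → M)
    (hZ : ∀ m : M, MeasurableSet (Z ⁻¹' {m})) (c : M → S) :
    shannonEntropy μ (fun ω => c (Z ω))
      = distEnt (distPush (fun m => (μ (Z ⁻¹' {m})).toReal) c) := by
  unfold shannonEntropy distEnt
  congr 1
  refine Finset.sum_congr rfl fun s _ => ?_
  have hset : (fun ω => c (Z ω)) ⁻¹' {s}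
      = Z ⁻¹' ↑(Finset.univ.filter fun m => c m = s) := by
    ext ω
    simp
  have hμ : μ ((fun ω => c (Z ω)) ⁻¹' {s})
      = ∑ m ∈ Finset.univ.filter (fun m => c m = s), μ (Z ⁻¹' {m}) := by
    rw [hset, ← sum_measure_preimage_singleton _ (fun m _ => hZ m)]
  rw [hμ, ENNReal.toReal_sum (fun m _ => measure_ne_top μ _)]
  rfl

lemma bridge_sum (Z : Ω → M) (hZ : ∀ m : M, MeasurableSet (Z ⁻¹' {m})) :
    ∑ m, (μ (Z ⁻¹' {m})).toReal = 1 := by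
  rw [← ENNReal.toReal_sum (fun m _ => measure_ne_top μ _),
    sum_measure_preimage_singleton Finset.univ (fun m _ => hZ m)]
  simp

lemma bridge_mi {S T : Type*} [Fintype S] [Fintype T] [DecidableEq S] [DecidableEq T]
    (Z : Ω → M) (hZ : ∀ m : M, MeasurableSet (Z ⁻¹' {m})) (a : M → S) (b : M → T) :
    mutualInfo μ (fun ω => a (Z ω)) (fun ω => b (Z ω))
      = distMI (fun m => (μ (Z ⁻¹' {m})).toReal) a b := by
  have h1 := bridge_ent μ Z hZ a
  have h2 := bridge_ent μ Z hZ b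
  have h3 : shannonEntropy μ (fun ω => (a (Z ω), b (Z ω)))
      = distEnt (distPush (fun m => (μ (Z ⁻¹' {m})).toReal) (fun m => (a m, b m))) :=
    bridge_ent μ Z hZ (fun m => (a m, b m))
  rw [mutualInfo, distMI, h1, h2, ← h3]

end Bridge

/-- **Corollary 6 (Encoder-specific bound).** For a policy factoring as `π = f ∘ φ`
through an encoder `φ`, the channel-capacity term of Theorem 1 may be replaced by
`I[φ ∘ X : φ ∘ X̃]`. -/
theorem encoder_specific_bound
    {Ω : Type*} [MeasurableSpace Ω] (μ : Measure Ω) [IsProbabilityMeasure μ]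
    {𝒳 ℰ 𝒜 𝒜s 𝒟 : Type*} [Fintype 𝒳] [Fintype ℰ] [Fintype 𝒜] [Fintype 𝒜s] [Fintype 𝒟]
    [MeasurableSpace 𝒳] [DiscreteMeasurableSpace 𝒳]
    [MeasurableSpace ℰ] [DiscreteMeasurableSpace ℰ]
    [MeasurableSpace 𝒜] [DiscreteMeasurableSpace 𝒜]
    [MeasurableSpace 𝒜s] [DiscreteMeasurableSpace 𝒜s]
    [MeasurableSpace 𝒟] [DiscreteMeasurableSpace 𝒟]
    (X Xtil : Ω → 𝒳) (δ : Ω → 𝒟) (Astar : Ω → 𝒜s)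
    (hX : Measurable X) (hXtil : Measurable Xtil) (hδ : Measurable δ)
    (hAstar : Measurable Astar)
    (φ : 𝒳 → ℰ) (f : ℰ → 𝒜) :
    mutualInfo μ Astar ((f ∘ φ) ∘ X)
        + (mutualInfo μ ((f ∘ φ) ∘ X) ((f ∘ φ) ∘ Xtil) - mutualInfo μ ((f ∘ φ) ∘ X) δ)
      ≤ shannonEntropy μ Astar + mutualInfo μ (φ ∘ X) (φ ∘ Xtil) := by
  classical
  set Z : Ω → 𝒜s × 𝒳 × 𝒳 × 𝒟 := fun ω => (Astar ω, X ω, Xtil ω, δ ω) with hZdef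
  have hZm : Measurable Z := hAstar.prodMk (hX.prodMk (hXtil.prodMk hδ))
  have hZ : ∀ m : 𝒜s × 𝒳 × 𝒳 × 𝒟, MeasurableSet (Z ⁻¹' {m}) :=
    fun m => hZm (measurableSet_singleton m)
  set p : (𝒜s × 𝒳 × 𝒳 × 𝒟) → ℝ := fun m => (μ (Z ⁻¹' {m})).toReal with hpdef
  have hp : ∀ m, 0 ≤ p m := fun m => ENNReal.toReal_nonneg
  have hsum : ∑ m, p m = 1 := bridge_sum μ Z hZ
  set aS : (𝒜s × 𝒳 × 𝒳 × 𝒟) → 𝒜s := fun m => m.1 with haS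
  set e1 : (𝒜s × 𝒳 × 𝒳 × 𝒟) → ℰ := fun m => φ m.2.1 with he1
  set e2 : (𝒜s × 𝒳 × 𝒳 × 𝒟) → ℰ := fun m => φ m.2.2.1 with he2
  set d : (𝒜s × 𝒳 × 𝒳 × 𝒟) → 𝒟 := fun m => m.2.2.2 with hd
  have hA : mutualInfo μ Astar ((f ∘ φ) ∘ X) = distMI p aS (fun m => f (e1 m)) :=
    bridge_mi μ Z hZ aS (fun m => f (e1 m))
  have hB : mutualInfo μ ((f ∘ φ) ∘ X) ((f ∘ φ) ∘ Xtil)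
      = distMI p (fun m => f (e1 m)) (fun m => f (e2 m)) :=
    bridge_mi μ Z hZ (fun m => f (e1 m)) (fun m => f (e2 m))
  have hC : mutualInfo μ ((f ∘ φ) ∘ X) δ = distMI p (fun m => f (e1 m)) d :=
    bridge_mi μ Z hZ (fun m => f (e1 m)) d
  have hD : shannonEntropy μ Astar = distEnt (distPush p aS) :=
    bridge_ent μ Z hZ aS
  have hE : mutualInfo μ (φ ∘ X) (φ ∘ Xtil) = distMI p e1 e2 :=
    bridge_mi μ Z hZ e1 e2
  have b1 : distMI p aS (fun m => f (e1 m)) ≤ distEnt (distPush p aS) :=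
    distMI_le_ent hp aS (fun m => f (e1 m))
  have b2 : 0 ≤ distMI p (fun m => f (e1 m)) d :=
    distMI_nonneg hp hsum (fun m => f (e1 m)) d
  have b3 : distMI p (fun m => f (e1 m)) (fun m => f (e2 m)) ≤ distMI p e1 e2 := by
    calc distMI p (fun m => f (e1 m)) (fun m => f (e2 m))
        ≤ distMI p e1 (fun m => f (e2 m)) := distMI_dpi hp e1 (fun m => f (e2 m)) f
      _ = distMI p (fun m => f (e2 m)) e1 := distMI_comm p e1 (fun m => f (e2 m))
      _ ≤ distMI p e2 e1 := distMI_dpi hp e2 e1 f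
      _ = distMI p e1 e2 := distMI_comm p e2 e1
  rw [hA, hB, hC, hD, hE]
  linarith
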